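/- For connected graphs G and H, th_pd×(G □ H) ≤ th_pd×(G)·|V(H)|, and symmetrically th_pd×(G □ H) ≤ th_pd×(H)·|V(G)|. Moreover th_pd×(G □ H) ≥ th_pd×(G) and th_pd×(G □ H) ≥ th_pd×(H). -/

import Mathlib

open SimpleGraph Set

variable {V : Type*} {W : Type*}

/-- The closed neighborhood of a set `S`. -/
def closedNbhdSet (G : SimpleGraph V) (S : Set V) : Set V :=
  S ∪ {w | ∃ u ∈ S, G.Adj u w}

/-- One round of the zero forcing propagation step. -/
def pdStep (G : SimpleGraph V) (A : Set V) : Set V :=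
  A ∪ {w | ∃ u ∈ A, G.neighborSet u \ A = {w}}

/-- `obs G S k` is the set `P^[k](S)` of vertices observed after round `k`. -/
def obs (G : SimpleGraph V) (S : Set V) : ℕ → Set V
  | 0 => S
  | 1 => closedNbhdSet G S
  | (n + 2) => pdStep G (obs G S (n + 1))

/-- `S` is a power dominating set. -/
def IsPDS (G : SimpleGraph V) (S : Set V) : Prop :=
  ∃ t, obs G S t = Set.univ

/-- The power propagation time `pt_pd(G;S)`: least positive `t` with `P^[t](S) = V(G)`. -/
noncomputable def ptpd (G : SimpleGraph V) (S : Set V) : ℕ :=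
  sInf {t | 1 ≤ t ∧ obs G S t = Set.univ}

/-- `S` is a dominating set. -/
def IsDomSet (G : SimpleGraph V) (S : Set V) : Prop :=
  closedNbhdSet G S = Set.univ

/-- The domination number `γ(G)`. -/
noncomputable def gamma (G : SimpleGraph V) : ℕ :=
  sInf {k | ∃ S : Set V, IsDomSet G S ∧ S.ncard = k}

/-- The power domination number `γ_P(G)`. -/
noncomputable def gammaP (G : SimpleGraph V) : ℕ :=
  sInf {k | ∃ S : Set V, IsPDS G S ∧ S.ncard = k}

/-- The product power throttling number `th_pd^×(G)`. -/
noncomputable def thpd (G : SimpleGraph V) : ℕ :=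
  sInf {m | ∃ S : Set V, IsPDS G S ∧ m = S.ncard * ptpd G S}

/-- The power propagation time of `G`: minimum over minimum power dominating sets. -/
noncomputable def ptG (G : SimpleGraph V) : ℕ :=
  sInf {t | ∃ S : Set V, IsPDS G S ∧ S.ncard = gammaP G ∧ t = ptpd G S}

/-- `newObs G S k` is `P^(k)(S)`, the set of vertices first observed in round `k`. -/
def newObs (G : SimpleGraph V) (S : Set V) : ℕ → Set V
  | 0 => S
  | (k + 1) => obs G S (k + 1) \ obs G S k

/-- `rd G S v` is the round in which `v` is first observed. -/
noncomputable def rd (G : SimpleGraph V) (S : Set V) (v : V) : ℕ :=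
  sInf {k | v ∈ obs G S k}

/-!
Power domination in `G □ H` and in `G` simulate each other round by round, without delay. From
`S × V(H)`, the fibre over every vertex that `S` observes in `G` by round `t` is observed by round
`t`: a vertex `(u, y)` over an observed `u` has its whole `H`-fibre observed, so its unobserved
neighbours are exactly the `(x, y)` with `x` an unobserved `G`-neighbour of `u`. Conversely, the
projection of what `S` observes in `G □ H` is observed from the projection of `S`: a force along a
`G`-edge projects to a force in `G`, and a force along an `H`-edge stays inside a fibre that is
already observed. Set sizes grow by the factor `|V(H)|`, resp. do not grow, which gives the two
bounds; those for `H` follow from `G □ H ≃g H □ G`.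
-/

section Observation

variable {V' : Type*} (G : SimpleGraph V) {G' : SimpleGraph V'}

lemma obs_subset_obs_succ (S : Set V) : ∀ t, obs G S t ⊆ obs G S (t + 1)
  | 0 | 1 | _ + 2 => subset_union_left

lemma obs_mono (S : Set V) : Monotone (obs G S) :=
  monotone_nat_of_le_succ (obs_subset_obs_succ G S)

lemma ptpd_spec {S : Set V} (hS : IsPDS G S) : 1 ≤ ptpd G S ∧ obs G S (ptpd G S) = univ := by
  obtain ⟨t, ht⟩ := hS
  exact Nat.sInf_mem (s := {t | 1 ≤ t ∧ obs G S t = univ})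
    ⟨t + 1, le_add_self, eq_univ_of_univ_subset (ht ▸ obs_mono G S t.le_succ)⟩

lemma thpd_le_ncard_mul {S : Set V} {t : ℕ} (ht : 1 ≤ t) (hS : obs G S t = univ) :
    thpd G ≤ S.ncard * t := by
  have hpt : ptpd G S ≤ t := by
    apply Nat.sInf_le
    exact ⟨ht, hS⟩
  calc thpd G ≤ S.ncard * ptpd G S := by
        apply Nat.sInf_le
        exact ⟨S, ⟨t, hS⟩, rfl⟩
    _ ≤ S.ncard * t := by gcongr

lemma exists_isPDS_thpd_eq : ∃ S, IsPDS G S ∧ thpd G = S.ncard * ptpd G S :=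
  Nat.sInf_mem (s := {m | ∃ S : Set V, IsPDS G S ∧ m = S.ncard * ptpd G S})
    ⟨_, univ, ⟨0, rfl⟩, rfl⟩

lemma thpd_le_mul_of_forall_exists (c : ℕ)
    (h : ∀ S' : Set V', ∃ S : Set V,
      S.ncard ≤ c * S'.ncard ∧ ∀ t, obs G' S' t = univ → obs G S t = univ) :
    thpd G ≤ c * thpd G' := by
  obtain ⟨S', hS', hth⟩ := exists_isPDS_thpd_eq G'
  obtain ⟨hpos, hobs⟩ := ptpd_spec G' hS'
  obtain ⟨S, hcard, hS⟩ := h S'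
  calc thpd G ≤ S.ncard * ptpd G' S' := thpd_le_ncard_mul G hpos (hS _ hobs)
    _ ≤ c * S'.ncard * ptpd G' S' := by gcongr
    _ = c * thpd G' := by rw [hth, mul_assoc]

lemma obs_simulation {R : Set V → Set V' → Prop} {S : Set V} {S' : Set V'} (h₀ : R S S')
    (hN : ∀ A A', R A A' → R (closedNbhdSet G A) (closedNbhdSet G' A'))
    (hP : ∀ A A', R A A' → R (pdStep G A) (pdStep G' A')) :
    ∀ t, R (obs G S t) (obs G' S' t)
  | 0 => h₀
  | 1 => hN _ _ h₀
  | t + 2 => hP _ _ (obs_simulation h₀ hN hP (t + 1))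

variable {G}

lemma closedNbhdSet_preimage_iso (e : G ≃g G') (A : Set V') :
    closedNbhdSet G (e ⁻¹' A) = e ⁻¹' closedNbhdSet G' A := by
  ext w
  simp [closedNbhdSet, ← e.map_adj_iff, e.surjective.exists]

lemma pdStep_preimage_iso (e : G ≃g G') (A : Set V') :
    pdStep G (e ⁻¹' A) = e ⁻¹' pdStep G' A := by
  have hN (u : V) : G.neighborSet u \ e ⁻¹' A = e ⁻¹' (G'.neighborSet (e u) \ A) := by
    ext; simp [e.map_adj_iff]
  ext w
  simp only [pdStep, mem_union, mem_preimage, mem_ofPred_eq, hN, e.surjective.exists,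
    preimage_eq_iff_eq_image e.bijective, image_singleton]

lemma obs_preimage_iso (e : G ≃g G') (S : Set V') (t : ℕ) :
    obs G (e ⁻¹' S) t = e ⁻¹' obs G' S t :=
  obs_simulation G (R := fun A A' => A = e ⁻¹' A') rfl
    (fun _ _ h => h ▸ closedNbhdSet_preimage_iso e _)
    (fun _ _ h => h ▸ pdStep_preimage_iso e _) t

lemma thpd_le_of_iso (e : G ≃g G') : thpd G ≤ thpd G' := by
  simpa using thpd_le_mul_of_forall_exists G 1 fun S' =>
    ⟨e ⁻¹' S', by rw [ncard_preimage_of_injective_subset_range e.injective (by simp), one_mul],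
      fun t ht => by rw [obs_preimage_iso, ht, preimage_univ]⟩

end Observation

section BoxProd

variable {G : SimpleGraph V} {H : SimpleGraph W}

lemma closedNbhdSet_preimage_fst_subset {A : Set V} {A' : Set (V × W)}
    (h : Prod.fst ⁻¹' A ⊆ A') : Prod.fst ⁻¹' closedNbhdSet G A ⊆ closedNbhdSet (G □ H) A' := by
  rintro ⟨x, y⟩ (hx | ⟨u, hu, hux⟩)
  · exact Or.inl (h hx)
  · exact Or.inr ⟨(u, y), h hu, Or.inl ⟨hux, rfl⟩⟩

lemma pdStep_preimage_fst_subset {A : Set V} {A' : Set (V × W)}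
    (h : Prod.fst ⁻¹' A ⊆ A') : Prod.fst ⁻¹' pdStep G A ⊆ pdStep (G □ H) A' := by
  rintro ⟨x, y⟩ (hx | ⟨u, hu, hforce⟩)
  · exact Or.inl (h hx)
  by_cases hxy : (x, y) ∈ A'
  · exact Or.inl hxy
  have hux : x ∈ G.neighborSet u \ A := by rw [hforce]; rfl
  refine Or.inr ⟨(u, y), h hu, eq_singleton_iff_unique_mem.2 ⟨⟨Or.inl ⟨hux.1, rfl⟩, hxy⟩, ?_⟩⟩
  rintro ⟨x', y'⟩ ⟨⟨hux', rfl⟩ | ⟨-, rfl⟩, hx'⟩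
  · have hx'u : x' ∈ G.neighborSet u \ A := ⟨hux', fun hx'A => hx' (h hx'A)⟩
    rw [hforce] at hx'u
    rw [hx'u]
  · exact absurd (h hu) hx'

lemma closedNbhdSet_mapsTo_fst {A' : Set (V × W)} {A : Set V} (h : MapsTo Prod.fst A' A) :
    MapsTo Prod.fst (closedNbhdSet (G □ H) A') (closedNbhdSet G A) := by
  rintro ⟨x, y⟩ (hxy | ⟨⟨u, v⟩, huv, ⟨hux, -⟩ | ⟨-, rfl⟩⟩)
  · exact Or.inl (h hxy)
  · exact Or.inr ⟨u, h huv, hux⟩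
  · have hu := h huv
    exact Or.inl hu

lemma pdStep_mapsTo_fst {A' : Set (V × W)} {A : Set V} (h : MapsTo Prod.fst A' A) :
    MapsTo Prod.fst (pdStep (G □ H) A') (pdStep G A) := by
  rintro ⟨x, y⟩ (hxy | ⟨⟨u, v⟩, huv, hforce⟩)
  · exact Or.inl (h hxy)
  by_cases hx : x ∈ A
  · exact Or.inl hx
  have hxy : (x, y) ∈ (G □ H).neighborSet (u, v) \ A' := by rw [hforce]; rfl
  obtain ⟨⟨hux, rfl⟩ | ⟨-, rfl⟩, -⟩ := hxy
  · refine Or.inr ⟨u, h huv, eq_singleton_iff_unique_mem.2 ⟨⟨hux, hx⟩, fun z hz => ?_⟩⟩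
    have hzv : (z, v) ∈ (G □ H).neighborSet (u, v) \ A' :=
      ⟨Or.inl ⟨hz.1, rfl⟩, fun hzv => hz.2 (h hzv)⟩
    rw [hforce] at hzv
    exact congrArg Prod.fst hzv
  · exact absurd (h huv) hx

lemma preimage_fst_obs_subset (S : Set V) (t : ℕ) :
    Prod.fst ⁻¹' obs G S t ⊆ obs (G □ H) (Prod.fst ⁻¹' S) t :=
  obs_simulation G (R := fun A A' => Prod.fst ⁻¹' A ⊆ A') subset_rfl
    (fun _ _ => closedNbhdSet_preimage_fst_subset) (fun _ _ => pdStep_preimage_fst_subset) t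

lemma obs_mapsTo_fst (S : Set (V × W)) (t : ℕ) :
    MapsTo Prod.fst (obs (G □ H) S t) (obs G (Prod.fst '' S) t) :=
  obs_simulation (G □ H) (R := fun A' A => MapsTo Prod.fst A' A) (mapsTo_image _ _)
    (fun _ _ => closedNbhdSet_mapsTo_fst) (fun _ _ => pdStep_mapsTo_fst) t

variable (G H)

lemma thpd_boxProd_le_card_mul : thpd (G □ H) ≤ Nat.card W * thpd G :=
  thpd_le_mul_of_forall_exists (G □ H) (G' := G) _ fun S =>
    ⟨Prod.fst ⁻¹' S, by rw [← prod_univ, ncard_prod, ncard_univ, mul_comm],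
      fun t ht => by simpa [ht] using preimage_fst_obs_subset (G := G) (H := H) S t⟩

lemma thpd_le_thpd_boxProd [Finite V] [Finite W] [Nonempty W] : thpd G ≤ thpd (G □ H) := by
  simpa using thpd_le_mul_of_forall_exists G 1 fun S =>
    ⟨Prod.fst '' S, by rw [one_mul]; exact ncard_image_le S.toFinite,
      fun t ht => eq_univ_of_univ_subset fun x _ =>
        obs_mapsTo_fst S t (ht ▸ mem_univ (x, Classical.arbitrary W))⟩

end BoxProd

theorem stmt19 [Fintype V] [Fintype W] (G : SimpleGraph V) (H : SimpleGraph W)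
    (hG : G.Connected) (hH : H.Connected) :
    thpd (G □ H) ≤ thpd G * Fintype.card W ∧
    thpd (G □ H) ≤ thpd H * Fintype.card V ∧
    thpd G ≤ thpd (G □ H) ∧ thpd H ≤ thpd (G □ H) := by
  have := hG.nonempty
  have := hH.nonempty
  refine ⟨?_, ?_, thpd_le_thpd_boxProd G H, ?_⟩
  · simpa [mul_comm] using thpd_boxProd_le_card_mul G H
  · calc thpd (G □ H) ≤ thpd (H □ G) := thpd_le_of_iso (boxProdComm G H)
      _ ≤ thpd H * Fintype.card V := by simpa [mul_comm] using thpd_boxProd_le_card_mul H G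
  · exact (thpd_le_thpd_boxProd H G).trans (thpd_le_of_iso (boxProdComm H G))
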